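/- If G is a well-totally-dominated graph with total domination number 2 and minimum degree at least 3, then G contains two vertex-disjoint dominating edges (the dominating-edge subgraph has matching number at least 2). -/
import Mathlib


def IsTDS {V : Type*} (G : SimpleGraph V) (S : Set V) : Prop :=
  ∀ v : V, ∃ u ∈ S, G.Adj v u

def IsMinTDS {V : Type*} (G : SimpleGraph V) (S : Set V) : Prop :=
  IsTDS G S ∧ ∀ T ⊂ S, ¬ IsTDS G T

/-- An edge whose endpoints form a total dominating set. -/
def DomEdge {V : Type*} (G : SimpleGraph V) (u v : V) : Prop :=
  G.Adj u v ∧ IsTDS G {u, v}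

lemma exists_minTDS_subset {V : Type*} [Fintype V] (G : SimpleGraph V) :
    ∀ n (T : Set V), T.ncard = n → IsTDS G T → ∃ S ⊆ T, IsMinTDS G S := by
  intro n
  induction n using Nat.strong_induction_on with
  | _ n ih =>
    intro T hn hT
    by_cases h : ∀ T' ⊂ T, ¬ IsTDS G T'
    · exact ⟨T, subset_rfl, hT, h⟩
    · push_neg at h
      obtain ⟨T', hsub, hT'⟩ := h
      subst hn
      obtain ⟨S, hS, hmin⟩ := ih T'.ncard
        (Set.ncard_lt_ncard hsub (Set.toFinite T)) T' rfl hT'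
      exact ⟨S, hS.trans hsub.subset, hmin⟩

lemma minTDS_edge {V : Type*} (G : SimpleGraph V) {a b : V} (h : IsTDS G {a, b}) :
    G.Adj a b := by
  obtain ⟨u, hu, hadj⟩ := h a
  rcases hu with rfl | rfl
  · exact absurd hadj (G.irrefl)
  · exact hadj

/-- A well-totally-dominated graph with total domination number 2 and minimum
degree at least 3 has two vertex-disjoint dominating edges. -/
theorem stmt_10 {V : Type*} [Fintype V] (G : SimpleGraph V)
    (hdeg : ∀ v : V, 3 ≤ (G.neighborSet v).ncard)
    (hex : ∃ S : Set V, IsMinTDS G S)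
    (hWTD2 : ∀ S : Set V, IsMinTDS G S → S.ncard = 2) :
    ∃ a b c d : V, DomEdge G a b ∧ DomEdge G c d ∧
      Disjoint ({a, b} : Set V) {c, d} := by
  obtain ⟨S₀, hS₀⟩ := hex
  obtain ⟨a, b, hab, rfl⟩ := Set.ncard_eq_two.mp (hWTD2 _ hS₀)
  have hTDSab : IsTDS G {a, b} := hS₀.1
  -- the complement of {a, b} is a TDS since min degree ≥ 3
  have hcomp : IsTDS G (({a, b} : Set V)ᶜ) := by
    intro w
    by_contra hcon
    push_neg at hcon
    have hsub : G.neighborSet w ⊆ {a, b} := by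
      intro x hx
      by_contra hx'
      exact hcon x hx' hx
    have h2 : (G.neighborSet w).ncard ≤ 2 := by
      calc (G.neighborSet w).ncard ≤ ({a, b} : Set V).ncard :=
            Set.ncard_le_ncard hsub (Set.toFinite _)
        _ ≤ 2 := by
            have := Set.ncard_insert_le a ({b} : Set V)
            simpa using this
    have := hdeg w
    omega
  obtain ⟨S, hSsub, hSmin⟩ := exists_minTDS_subset G _ _ rfl hcomp
  obtain ⟨c, d, hcd, rfl⟩ := Set.ncard_eq_two.mp (hWTD2 _ hSmin)
  refine ⟨a, b, c, d, ⟨minTDS_edge G hTDSab, hTDSab⟩,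
    ⟨minTDS_edge G hSmin.1, hSmin.1⟩, ?_⟩
  exact Set.subset_compl_iff_disjoint_left.mp hSsub
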